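/- arXiv:0811.3274 — 4 statements merged into one kernel-verified Lean document; each statement's English description precedes it below -/
import Mathlib

section
/- Let ω = exp(2π√−1/3). Let α1, α2, α3 be complex numbers and let β1, β2, β3 be complex numbers with β1^3 = α1, β2^3 = α2, β3^3 = α3. Then the following are equivalent: (i) there exist complex numbers y0, y1, y2, y3, not all zero, and a nonzero complex number λ such that y0^4 + y1^4 + y2^4 + y3^4 = 0, y0 + α1·y1 + α2·y2 + α3·y3 = 0, 4·y0^3 = λ, 4·y1^3 = λ·α1, 4·y2^3 = λ·α2, and 4·y3^3 = λ·α3; (ii) the product over all i1, i2, i3 ∈ {0, 1, 2} of (1 + ω^{i1}·β1^4 + ω^{i2}·β2^4 + ω^{i3}·β3^4) equals 0. -/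
/-!
The tangency conditions give `y_k ^ 3 = (y_0 β_k) ^ 3`, hence `y_k = ω ^ j_k * y_0 * β_k`, and the
hyperplane equation becomes `y_0` times the factor of index `(j_1, j_2, j_3)`, where `y_0 ≠ 0`
since `λ ≠ 0`. Conversely a vanishing factor gives the point `(1, ω ^ j_1 β_1, ω ^ j_2 β_2, ω ^ j_3 β_3)`,
which lies on `X` by Euler's relation `∑ y_k ^ 4 = ∑ y_k * y_k ^ 3 = y_0 + ∑ α_k y_k`.
-/

noncomputable def ω : ℂ := Complex.exp (2 * Real.pi * Complex.I / 3)

namespace IsPrimitiveRoot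

variable {R : Type*} [CommRing R] {n : ℕ} {ζ : R}

theorem pow_mul_pow_eq (hζ : IsPrimitiveRoot ζ n) (i : ℕ) (b : R) : (ζ ^ i * b) ^ n = b ^ n := by
  rw [mul_pow, pow_right_comm, hζ.pow_eq_one, one_pow, one_mul]

open Polynomial in
theorem exists_eq_pow_mul_of_pow_eq_pow [IsDomain R] [NeZero n] (hζ : IsPrimitiveRoot ζ n)
    {a b : R} (h : a ^ n = b ^ n) : ∃ i : Fin n, a = ζ ^ (i : ℕ) * b := by
  have ha : a ∈ nthRoots n (b ^ n) := (mem_nthRoots (NeZero.pos n)).2 h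
  rw [hζ.nthRoots_eq rfl, Multiset.mem_map] at ha
  obtain ⟨i, hi, rfl⟩ := ha
  exact ⟨⟨i, Multiset.mem_range.1 hi⟩, rfl⟩

end IsPrimitiveRoot

theorem isPrimitiveRoot_ω : IsPrimitiveRoot ω 3 := by
  simpa [ω] using Complex.isPrimitiveRoot_exp 3 three_ne_zero

theorem dual_membership_iff_product_vanishes (α1 α2 α3 β1 β2 β3 : ℂ)
    (hβ1 : β1 ^ 3 = α1) (hβ2 : β2 ^ 3 = α2) (hβ3 : β3 ^ 3 = α3) :
    (∃ y0 y1 y2 y3 l : ℂ,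
        ¬(y0 = 0 ∧ y1 = 0 ∧ y2 = 0 ∧ y3 = 0) ∧ l ≠ 0 ∧
        y0 ^ 4 + y1 ^ 4 + y2 ^ 4 + y3 ^ 4 = 0 ∧
        y0 + α1 * y1 + α2 * y2 + α3 * y3 = 0 ∧
        4 * y0 ^ 3 = l ∧ 4 * y1 ^ 3 = l * α1 ∧
        4 * y2 ^ 3 = l * α2 ∧ 4 * y3 ^ 3 = l * α3) ↔
    (∏ i1 : Fin 3, ∏ i2 : Fin 3, ∏ i3 : Fin 3,
        (1 + ω ^ (i1 : ℕ) * β1 ^ 4 + ω ^ (i2 : ℕ) * β2 ^ 4 + ω ^ (i3 : ℕ) * β3 ^ 4)) = 0 := by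
  subst hβ1 hβ2 hβ3
  simp only [Finset.prod_eq_zero_iff, Finset.mem_univ, true_and]
  constructor
  · rintro ⟨y0, y1, y2, y3, l, -, hl, -, hlin, h0, h1, h2, h3⟩
    have hy0 : y0 ≠ 0 := by rintro rfl; exact hl (by simp [← h0])
    obtain ⟨j1, rfl⟩ := isPrimitiveRoot_ω.exists_eq_pow_mul_of_pow_eq_pow
      (a := y1) (b := y0 * β1) (by linear_combination (h1 - β1 ^ 3 * h0) / 4)
    obtain ⟨j2, rfl⟩ := isPrimitiveRoot_ω.exists_eq_pow_mul_of_pow_eq_pow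
      (a := y2) (b := y0 * β2) (by linear_combination (h2 - β2 ^ 3 * h0) / 4)
    obtain ⟨j3, rfl⟩ := isPrimitiveRoot_ω.exists_eq_pow_mul_of_pow_eq_pow
      (a := y3) (b := y0 * β3) (by linear_combination (h3 - β3 ^ 3 * h0) / 4)
    exact ⟨j1, j2, j3, mul_left_cancel₀ hy0 (by linear_combination hlin)⟩
  · rintro ⟨j1, j2, j3, hF⟩
    have hcube := isPrimitiveRoot_ω.pow_mul_pow_eq
    refine ⟨1, ω ^ (j1 : ℕ) * β1, ω ^ (j2 : ℕ) * β2, ω ^ (j3 : ℕ) * β3, 4,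
      fun h => one_ne_zero h.1, by norm_num, ?_, by linear_combination hF, by norm_num,
      by rw [hcube], by rw [hcube], by rw [hcube]⟩
    linear_combination hF + ω ^ (j1 : ℕ) * β1 * hcube j1 β1 + ω ^ (j2 : ℕ) * β2 * hcube j2 β2
      + ω ^ (j3 : ℕ) * β3 * hcube j3 β3
end

section
/- Let ω = exp(2π√−1/3) and for complex numbers β0, β1, β2, β3 define Φ(β0, β1, β2, β3) to be the product over all i1, i2, i3 ∈ {0, 1, 2} of (β0^4 + ω^{i1}·β1^4 + ω^{i2}·β2^4 + ω^{i3}·β3^4). Then for each fixed index i ∈ {0, 1, 2, 3}, Φ is invariant under the substitution which multiplies every β_j with j ≠ i by ω and leaves β_i fixed; for example Φ(β0, ω·β1, ω·β2, ω·β3) = Φ(β0, β1, β2, β3), and similarly for i = 1, 2, 3. -/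
noncomputable def Φ (β : Fin 4 → ℂ) : ℂ :=
  ∏ i1 : Fin 3, ∏ i2 : Fin 3, ∏ i3 : Fin 3,
    (β 0 ^ 4 + ω ^ (i1 : ℕ) * β 1 ^ 4 + ω ^ (i2 : ℕ) * β 2 ^ 4 + ω ^ (i3 : ℕ) * β 3 ^ 4)

theorem prod_fin_pow_mul_eq_prod_fin_pow {R M : Type*} [Monoid R] [CommMonoid M] {ζ : R} {n : ℕ}
    (hζ : ζ ^ n = 1) (g : R → M) :
    ∏ k : Fin n, g (ζ ^ (k : ℕ) * ζ) = ∏ k : Fin n, g (ζ ^ (k : ℕ)) := by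
  cases n with
  | zero => simp
  | succ n =>
    rw [← Equiv.prod_comp (Equiv.addRight (1 : Fin (n + 1))) (fun k => g (ζ ^ (k : ℕ)))]
    refine Finset.prod_congr rfl fun k _ => congrArg g ?_
    rw [Equiv.coe_addRight, ← pow_succ, pow_eq_pow_mod _ hζ, Fin.val_add, Fin.val_one',
      Nat.add_mod_mod]

theorem omega_pow_three : ω ^ 3 = 1 := by
  simpa [ω] using (Complex.isPrimitiveRoot_exp 3 three_ne_zero).pow_eq_one

theorem omega_pow_four : ω ^ 4 = ω := by
  rw [pow_succ, omega_pow_three, one_mul]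

noncomputable def Ψ (a b c d : ℂ) : ℂ :=
  ∏ i1 : Fin 3, ∏ i2 : Fin 3, ∏ i3 : Fin 3,
    (a + ω ^ (i1 : ℕ) * b + ω ^ (i2 : ℕ) * c + ω ^ (i3 : ℕ) * d)

theorem Φ_eq_Ψ (β : Fin 4 → ℂ) : Φ β = Ψ (β 0 ^ 4) (β 1 ^ 4) (β 2 ^ 4) (β 3 ^ 4) := rfl

section Ψ

variable (a b c d : ℂ)

theorem Ψ_mul_omega_snd : Ψ a (ω * b) c d = Ψ a b c d := by
  simp only [Ψ, ← mul_assoc]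
  exact prod_fin_pow_mul_eq_prod_fin_pow omega_pow_three fun t =>
    ∏ i2 : Fin 3, ∏ i3 : Fin 3, (a + t * b + ω ^ (i2 : ℕ) * c + ω ^ (i3 : ℕ) * d)

theorem Ψ_mul_omega_thd : Ψ a b (ω * c) d = Ψ a b c d := by
  simp only [Ψ, ← mul_assoc]
  refine Finset.prod_congr rfl fun i1 _ => ?_
  exact prod_fin_pow_mul_eq_prod_fin_pow omega_pow_three fun t =>
    ∏ i3 : Fin 3, (a + ω ^ (i1 : ℕ) * b + t * c + ω ^ (i3 : ℕ) * d)

theorem Ψ_mul_omega_fth : Ψ a b c (ω * d) = Ψ a b c d := by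
  simp only [Ψ, ← mul_assoc]
  refine Finset.prod_congr rfl fun i1 _ => Finset.prod_congr rfl fun i2 _ => ?_
  exact prod_fin_pow_mul_eq_prod_fin_pow omega_pow_three fun t =>
    a + ω ^ (i1 : ℕ) * b + ω ^ (i2 : ℕ) * c + t * d

theorem Ψ_mul_all (t : ℂ) : Ψ (t * a) (t * b) (t * c) (t * d) = t ^ 27 * Ψ a b c d := by
  simp only [Ψ, mul_left_comm _ t, ← mul_add, Finset.prod_mul_distrib, Finset.prod_const,
    Finset.card_univ, Fintype.card_fin, ← pow_mul, Nat.reduceMul]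

theorem Ψ_mul_omega_fst : Ψ (ω * a) b c d = Ψ a b c d := by
  have hω : ∀ x : ℂ, x = ω * (ω ^ 2 * x) := fun x => by
    rw [← mul_assoc, ← pow_succ', omega_pow_three, one_mul]
  calc Ψ (ω * a) b c d = Ψ (ω * a) (ω * (ω ^ 2 * b)) (ω * (ω ^ 2 * c)) (ω * (ω ^ 2 * d)) := by
        rw [← hω, ← hω, ← hω]
    _ = Ψ a (ω ^ 2 * b) (ω ^ 2 * c) (ω ^ 2 * d) := by
        rw [Ψ_mul_all, show 27 = 3 * 9 from rfl, pow_mul, omega_pow_three, one_pow, one_mul]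
    _ = Ψ a b c d := by
        simp only [sq, mul_assoc, Ψ_mul_omega_snd, Ψ_mul_omega_thd, Ψ_mul_omega_fth]

end Ψ

theorem Phi_invariant_under_omega_substitution (β : Fin 4 → ℂ) (i : Fin 4) :
    Φ (fun j => if j = i then β j else ω * β j) = Φ β := by
  fin_cases i <;>
    simp [Φ_eq_Ψ, mul_pow, omega_pow_four, Ψ_mul_omega_fst, Ψ_mul_omega_snd, Ψ_mul_omega_thd,
      Ψ_mul_omega_fth]
end

section
/- Let c1, c2 be complex numbers with |c1|^4 + |c2|^4 < 1 and let v be any complex number. If x1, x2 are complex numbers satisfying c1^3·(c1^3·x1 + c2^3·x2)^3 + x1^3 = 0, c2^3·(c1^3·x1 + c2^3·x2)^3 + x2^3 = 0, and v·(c1^3·x1 + c2^3·x2)^3 = 0, then x1 = 0 and x2 = 0. -/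
/-!
Put `s = ∑ i, cᵢ³ xᵢ`. Each equation `cᵢ³ s³ + xᵢ³ = 0` forces `‖xᵢ‖ = ‖cᵢ‖ ‖s‖`, so the triangle
inequality gives `‖s‖ ≤ ∑ ‖cᵢ‖³ ‖xᵢ‖ = (∑ ‖cᵢ‖⁴) ‖s‖`. As `∑ ‖cᵢ‖⁴ < 1`, this means `s = 0`, and
then `xᵢ³ = 0`.
-/

section

variable {𝕜 : Type*} [NormedDivisionRing 𝕜] {n : ℕ}

lemma norm_eq_norm_mul_norm_of_pow_mul_pow_add_pow_eq_zero (hn : n ≠ 0) {c s x : 𝕜}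
    (h : c ^ n * s ^ n + x ^ n = 0) : ‖x‖ = ‖c‖ * ‖s‖ := by
  have hpow : ‖x‖ ^ n = (‖c‖ * ‖s‖) ^ n := by
    rw [← norm_pow, eq_neg_of_add_eq_zero_right h, norm_neg, norm_mul, norm_pow, norm_pow, mul_pow]
  exact (pow_left_inj₀ (norm_nonneg _) (by positivity) hn).mp hpow

variable {ι : Type*} [Fintype ι]

lemma sum_pow_mul_eq_zero_of_pow_mul_pow_add_pow_eq_zero (hn : n ≠ 0) {c x : ι → 𝕜}
    (hc : ∑ i, ‖c i‖ ^ (n + 1) < 1)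
    (h : ∀ i, c i ^ n * (∑ j, c j ^ n * x j) ^ n + x i ^ n = 0) :
    ∑ i, c i ^ n * x i = 0 := by
  set s := ∑ i, c i ^ n * x i
  have hx i : ‖x i‖ = ‖c i‖ * ‖s‖ :=
    norm_eq_norm_mul_norm_of_pow_mul_pow_add_pow_eq_zero hn (h i)
  have hle : ‖s‖ ≤ (∑ i, ‖c i‖ ^ (n + 1)) * ‖s‖ :=
    calc ‖s‖ ≤ ∑ i, ‖c i ^ n * x i‖ := norm_sum_le _ _
      _ = (∑ i, ‖c i‖ ^ (n + 1)) * ‖s‖ := by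
        simp only [norm_mul, norm_pow, hx, Finset.sum_mul, pow_succ, mul_assoc]
  by_contra hs
  exact (mul_lt_of_lt_one_left (norm_pos_iff.mpr hs) hc).not_ge hle

end

theorem no_singularities_on_line_general (c1 c2 : ℂ)
    (h : ‖c1‖ ^ 4 + ‖c2‖ ^ 4 < 1) (x1 x2 : ℂ)
    (h1 : c1 ^ 3 * (c1 ^ 3 * x1 + c2 ^ 3 * x2) ^ 3 + x1 ^ 3 = 0)
    (h2 : c2 ^ 3 * (c1 ^ 3 * x1 + c2 ^ 3 * x2) ^ 3 + x2 ^ 3 = 0) :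
    x1 = 0 ∧ x2 = 0 := by
  have hs : c1 ^ 3 * x1 + c2 ^ 3 * x2 = 0 := by
    simpa [Fin.sum_univ_two] using
      sum_pow_mul_eq_zero_of_pow_mul_pow_add_pow_eq_zero (n := 3) (c := ![c1, c2])
        (x := ![x1, x2]) three_ne_zero (by simpa [Fin.sum_univ_two] using h)
        (by simp [Fin.forall_fin_two, Fin.sum_univ_two, h1, h2])
  rw [hs] at h1 h2
  exact ⟨by simpa using h1, by simpa using h2⟩

theorem no_singularities_on_line (c1 c2 : ℂ)
    (h : ‖c1‖ ^ 4 + ‖c2‖ ^ 4 < 1) (v : ℂ) (x1 x2 : ℂ)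
    (h1 : c1 ^ 3 * (c1 ^ 3 * x1 + c2 ^ 3 * x2) ^ 3 + x1 ^ 3 = 0)
    (h2 : c2 ^ 3 * (c1 ^ 3 * x1 + c2 ^ 3 * x2) ^ 3 + x2 ^ 3 = 0)
    (h3 : v * (c1 ^ 3 * x1 + c2 ^ 3 * x2) ^ 3 = 0) :
    x1 = 0 ∧ x2 = 0 :=
  no_singularities_on_line_general c1 c2 h x1 x2 h1 h2
end

section
/- Let c1, c2 be complex numbers with |c1|^4 + |c2|^4 < 1. Then there is no complex number x2 satisfying both (c1^3 + c2^3·x2)^4 + 1 + x2^4 = 0 and c2^3·(c1^3 + c2^3·x2)^3 + x2^3 = 0. -/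
/-! Put `w = c1^3 + c2^3 x2`. Subtracting `x2` times the second equation from the first leaves
`c1^3 w^3 = -1`, and the second equation says `x2^3 = (-c2 w)^3`; hence `|c1| |w| = 1` and
`|x2| = |c2| |w|`. Multiplying the triangle inequality `|w| ≤ |c1|^3 + |c2|^3 |x2|` by `|c1|`
then gives `1 ≤ |c1|^4 + |c2|^4`. -/

theorem mul_cube_eq_neg_one_of_quartic {R : Type*} [CommRing R] {a b x : R}
    (h1 : (a + b * x) ^ 4 + 1 + x ^ 4 = 0) (h2 : b * (a + b * x) ^ 3 + x ^ 3 = 0) :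
    a * (a + b * x) ^ 3 = -1 := by
  linear_combination h1 - x * h2

theorem norm_eq_of_pow_eq {𝕜 : Type*} [NormedDivisionRing 𝕜] {x y : 𝕜} {n : ℕ} (hn : n ≠ 0)
    (h : x ^ n = y ^ n) : ‖x‖ = ‖y‖ := by
  have h' := congrArg norm h
  rw [norm_pow, norm_pow] at h'
  exact (pow_left_inj₀ (norm_nonneg x) (norm_nonneg y) hn).mp h'

theorem one_le_norm_pow_four_add_of_quartic {𝕜 : Type*} [NormedField 𝕜] {c1 c2 x : 𝕜}
    (h1 : (c1 ^ 3 + c2 ^ 3 * x) ^ 4 + 1 + x ^ 4 = 0)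
    (h2 : c2 ^ 3 * (c1 ^ 3 + c2 ^ 3 * x) ^ 3 + x ^ 3 = 0) :
    1 ≤ ‖c1‖ ^ 4 + ‖c2‖ ^ 4 := by
  set w := c1 ^ 3 + c2 ^ 3 * x
  have hc1w : ‖c1‖ * ‖w‖ = 1 := by
    have hcube : (c1 * w) ^ 3 = (-1) ^ 3 := by
      linear_combination mul_cube_eq_neg_one_of_quartic h1 h2
    simpa using norm_eq_of_pow_eq three_ne_zero hcube
  have hx : ‖x‖ = ‖c2‖ * ‖w‖ := by
    have hcube : x ^ 3 = (-(c2 * w)) ^ 3 := by linear_combination h2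
    simpa using norm_eq_of_pow_eq three_ne_zero hcube
  have htri : ‖w‖ ≤ ‖c1‖ ^ 3 + ‖c2‖ ^ 4 * ‖w‖ :=
    calc ‖w‖ ≤ ‖c1 ^ 3‖ + ‖c2 ^ 3 * x‖ := norm_add_le _ _
      _ = ‖c1‖ ^ 3 + ‖c2‖ ^ 4 * ‖w‖ := by rw [norm_pow, norm_mul, norm_pow, hx]; ring
  calc 1 = ‖c1‖ * ‖w‖ := hc1w.symm
    _ ≤ ‖c1‖ * (‖c1‖ ^ 3 + ‖c2‖ ^ 4 * ‖w‖) := mul_le_mul_of_nonneg_left htri (norm_nonneg c1)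
    _ = ‖c1‖ ^ 4 + ‖c2‖ ^ 4 := by linear_combination ‖c2‖ ^ 4 * hc1w

theorem no_branching_over_point (c1 c2 : ℂ)
    (h : ‖c1‖ ^ 4 + ‖c2‖ ^ 4 < 1) :
    ¬ ∃ x2 : ℂ,
        (c1 ^ 3 + c2 ^ 3 * x2) ^ 4 + 1 + x2 ^ 4 = 0 ∧
        c2 ^ 3 * (c1 ^ 3 + c2 ^ 3 * x2) ^ 3 + x2 ^ 3 = 0 := by
  rintro ⟨x2, h1, h2⟩
  exact h.not_ge (one_le_norm_pow_four_add_of_quartic h1 h2)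
end
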